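/- For all A, B ∈ Sym and integers r ≥ 1, s ≥ 0 with r + s ≤ n − 1, the trace of the mixed Newton tensor satisfies tr(T_{r,s}(A,B)) = (r·(n − (r+s))/(r+s)) · P_{r−1,s}(A,B). (This identity is used in the proof of the weighted spacetime Minkowski formulas for mixed higher order mean curvatures.) -/

import Mathlib

/-!
Write `M = 1 + y • A + z • B` and `m = n - 1`. Adding `t` to the diagonal entry `A_aa` changes
`det M` by `t * y * adj(M)_aa`, so every coefficient `P_{r,s}` is affine along `A + t • E_aa`, and
the slopes summed over `a` are the coefficients of `y * tr adj(M)`. By Jacobi's formula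
`tr adj(M)` is the derivative of `u ↦ det (u • 1 + y • A + z • B)` at `u = 1`, and homogeneity of
the determinant writes this function as `∑ c_{r,s} y^r z^s u^(m-r-s) P_{r,s}`, so
`tr adj(M) = ∑ c_{r,s} (m - r - s) y^r z^s P_{r,s}`. Comparing the coefficients of `y^r z^s` and
using `c_{r-1,s} / c_{r,s} = r / (r + s)` for `c_{r,s} = (r+s)! / (r! s!)` gives the identity.
-/

open Matrix Finset

noncomputable section

/-- The mixed Newton tensor `T_{r,s}(A,B)`, whose `(a,b)` entry is the partial
derivative `∂P_{r,s}(A,B)/∂A_{ab}`, the derivative being taken over the space of all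
real `(n-1)×(n-1)` matrices. -/
def newtonTensorA {m : ℕ}
    (P : Matrix (Fin m) (Fin m) ℝ → Matrix (Fin m) (Fin m) ℝ → ℕ → ℕ → ℝ)
    (A B : Matrix (Fin m) (Fin m) ℝ) (r s : ℕ) : Matrix (Fin m) (Fin m) ℝ :=
  Matrix.of fun a b =>
    deriv (fun t : ℝ => P (A + t • Matrix.single a b (1 : ℝ)) B r s) 0

theorem Polynomial.eq_of_forall_sum_range_pow_mul_eq {K : Type*} [Field K] [Infinite K]
    {N i : ℕ} {f g : ℕ → K}
    (h : ∀ y : K, ∑ j ∈ range N, y ^ j * f j = ∑ j ∈ range N, y ^ j * g j) (hi : i < N) :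
    f i = g i := by
  have hpoly : ∑ j ∈ range N, monomial j (f j) = ∑ j ∈ range N, monomial j (g j) :=
    Polynomial.funext fun y => by
      simpa [Polynomial.eval_finsetSum, mul_comm] using h y
  simpa [Polynomial.finsetSum_coeff, Polynomial.coeff_monomial, hi] using
    congrArg (Polynomial.coeff · i) hpoly

def triangleSum {R : Type*} [CommRing R] (N : ℕ) (y z : R) : (ℕ → ℕ → R) →ₗ[R] R where
  toFun f := ∑ r ∈ range N, ∑ s ∈ range (N - r), y ^ r * z ^ s * f r s
  map_add' f g := by simp only [Pi.add_apply, mul_add, sum_add_distrib]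
  map_smul' c f := by simp only [Pi.smul_apply, smul_eq_mul, mul_sum, RingHom.id_apply]; ring_nf

section triangleSum

variable {R : Type*} [CommRing R]

theorem triangleSum_apply (N : ℕ) (y z : R) (f : ℕ → ℕ → R) :
    triangleSum N y z f = ∑ r ∈ range N, ∑ s ∈ range (N - r), y ^ r * z ^ s * f r s :=
  rfl

theorem eq_of_forall_triangleSum_eq {K : Type*} [Field K] [Infinite K] {N r s : ℕ} {f g : ℕ → ℕ → K}
    (h : ∀ y z, triangleSum N y z f = triangleSum N y z g) (hrs : r + s < N) :
    f r s = g r s := by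
  have hrow : ∀ z : K, ∑ s ∈ range (N - r), z ^ s * f r s = ∑ s ∈ range (N - r), z ^ s * g r s :=
    fun z => Polynomial.eq_of_forall_sum_range_pow_mul_eq
      (f := fun r => ∑ s ∈ range (N - r), z ^ s * f r s)
      (g := fun r => ∑ s ∈ range (N - r), z ^ s * g r s)
      (fun y => by simpa [triangleSum_apply, mul_sum, mul_assoc] using h y z) (by omega)
  exact Polynomial.eq_of_forall_sum_range_pow_mul_eq hrow (by omega)

theorem triangleSum_succ_of_eq_zero {N : ℕ} {f : ℕ → ℕ → R} (hf : ∀ r s, r + s = N → f r s = 0)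
    (y z : R) : triangleSum (N + 1) y z f = triangleSum N y z f := by
  have hrow : ∀ r ∈ range (N + 1), ∑ s ∈ range (N + 1 - r), y ^ r * z ^ s * f r s
      = ∑ s ∈ range (N - r), y ^ r * z ^ s * f r s := by
    intro r hr
    rw [mem_range] at hr
    rw [show N + 1 - r = N - r + 1 by omega, sum_range_succ, hf r (N - r) (by omega),
      mul_zero, add_zero]
  rw [triangleSum_apply, sum_congr rfl hrow, sum_range_succ, Nat.sub_self, sum_range_zero,
    add_zero, triangleSum_apply]

theorem mul_triangleSum (N : ℕ) (f : ℕ → ℕ → R) (y z : R) :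
    y * triangleSum N y z f
      = triangleSum (N + 1) y z (fun r s => if r = 0 then 0 else f (r - 1) s) := by
  rw [triangleSum_apply, triangleSum_apply, sum_range_succ', mul_sum]
  simp only [Nat.add_sub_add_right, Nat.add_one_ne_zero, if_false, Nat.add_sub_cancel, if_true,
    mul_zero, sum_const_zero, add_zero, mul_sum]
  exact sum_congr rfl fun r _ => sum_congr rfl fun s _ => by ring

theorem eq_of_forall_triangleSum_eq_mul_triangleSum {K : Type*} [Field K] [Infinite K] {N r s : ℕ}
    {f g : ℕ → ℕ → K} (hf : ∀ r s, r + s + 1 = N → f r s = 0)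
    (h : ∀ y z, triangleSum N y z g = y * triangleSum N y z f) (hrs : r + 1 + s < N) :
    g (r + 1) s = f r s := by
  have hshift : ∀ y z, triangleSum N y z g
      = triangleSum N y z (fun r s => if r = 0 then 0 else f (r - 1) s) := by
    intro y z
    obtain ⟨M, rfl⟩ : ∃ M, N = M + 1 := ⟨N - 1, by omega⟩
    rw [h, mul_triangleSum, triangleSum_succ_of_eq_zero]
    rintro (_ | r) s hrs
    · rfl
    · exact hf r s (by omega)
  simpa using eq_of_forall_triangleSum_eq hshift hrs

theorem hasDerivAt_triangleSum {N : ℕ} {f f' : ℕ → ℕ → ℝ → ℝ} {t : ℝ}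
    (hf : ∀ r s, HasDerivAt (f r s) (f' r s t) t) (y z : ℝ) :
    HasDerivAt (fun t => triangleSum N y z fun r s => f r s t)
      (triangleSum N y z fun r s => f' r s t) t := by
  simp only [triangleSum_apply]
  exact HasDerivAt.fun_sum fun r _ => HasDerivAt.fun_sum fun s _ => (hf r s).const_mul _

theorem pow_mul_triangleSum_div {K : Type*} [Field K] (m : ℕ) (f : ℕ → ℕ → K) (y z : K) {u : K}
    (hu : u ≠ 0) :
    u ^ m * triangleSum (m + 1) (y / u) (z / u) f
      = triangleSum (m + 1) y z (fun r s => u ^ (m - r - s) * f r s) := by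
  simp only [triangleSum_apply, mul_sum]
  refine sum_congr rfl fun r hr => sum_congr rfl fun s hs => ?_
  rw [mem_range] at hr hs
  rw [show u ^ m = u ^ (m - r - s) * u ^ r * u ^ s by rw [← pow_add, ← pow_add]; congr 1; omega]
  rw [div_pow, div_pow]
  field_simp

end triangleSum

namespace Matrix

variable {ι : Type*} [Fintype ι] [DecidableEq ι]

theorem det_add_smul_single {R : Type*} [CommRing R] (M : Matrix ι ι R) (i j : ι) (c : R) :
    (M + c • single i j 1).det = M.det + c * M.adjugate j i := by
  have hrow : M + c • single i j 1 = M.updateRow i (M i + c • Pi.single j 1) := by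
    ext k l
    rcases eq_or_ne k i with rfl | hk
    · simp [Pi.single_apply, single_apply, eq_comm]
    · simp [hk, Ne.symm hk]
  rw [hrow, det_updateRow_add, det_updateRow_smul, updateRow_eq_self, adjugate_apply]

theorem hasDerivAt_det_add_smul (M N : Matrix ι ι ℝ) :
    HasDerivAt (fun t : ℝ => (M + t • N).det) (∑ i, (M.updateRow i (N i)).det) 0 := by
  let D : ContinuousMultilinearMap ℝ (fun _ : ι => ι → ℝ) ℝ :=
    { (detRowAlternating : (ι → ℝ) [⋀^ι]→ₗ[ℝ] ℝ).toMultilinearMap with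
      cont := continuous_id.matrix_det }
  let M' : ι → ι → ℝ := M
  let N' : ι → ι → ℝ := N
  have hline : HasDerivAt (fun t : ℝ => M' + t • N') N' 0 := by
    simpa using ((hasDerivAt_id (0 : ℝ)).smul_const N').const_add M'
  have hD := (D.hasFDerivAt (M' + (0 : ℝ) • N')).comp_hasDerivAt (0 : ℝ) hline
  rwa [zero_smul, add_zero, ContinuousMultilinearMap.linearDeriv_apply] at hD

theorem hasDerivAt_det_add_smul_one (M : Matrix ι ι ℝ) :
    HasDerivAt (fun t : ℝ => (M + t • 1).det) M.adjugate.trace 0 := by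
  convert hasDerivAt_det_add_smul M 1 using 1
  simp only [trace, diag_apply, adjugate_apply]
  congr! with i
  exact funext fun j => one_eq_pi_single.symm

def HasDetCoeffs (N : ℕ) (B : Matrix ι ι ℝ) (Q : Matrix ι ι ℝ → ℕ → ℕ → ℝ) : Prop :=
  ∀ A y z, (1 + y • A + z • B).det = triangleSum N y z (Q A)

theorem trace_adjugate_eq_triangleSum {A B : Matrix ι ι ℝ} {f : ℕ → ℕ → ℝ}
    (hf : ∀ y z, (1 + y • A + z • B).det = triangleSum (Fintype.card ι + 1) y z f) (y z : ℝ) :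
    (1 + y • A + z • B).adjugate.trace = triangleSum (Fintype.card ι + 1) y z
      (fun r s => ((Fintype.card ι - r - s : ℕ) : ℝ) * f r s) := by
  set m := Fintype.card ι
  set M := 1 + y • A + z • B
  have hscale : ∀ t : ℝ, 1 + t ≠ 0 →
      (M + t • 1).det = triangleSum (m + 1) y z (fun r s => (1 + t) ^ (m - r - s) * f r s) := by
    intro t ht
    have hM : M + t • 1 = (1 + t) • (1 + (y / (1 + t)) • A + (z / (1 + t)) • B) := by
      simp only [M, smul_add, smul_smul, mul_div_cancel₀ _ ht, add_smul, one_smul]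
      abel
    rw [hM, det_smul, hf, pow_mul_triangleSum_div _ _ _ _ ht]
  have hnear : ∀ᶠ t in nhds (0 : ℝ), 1 + t ≠ 0 :=
    (continuous_const.add continuous_id).continuousAt.eventually_ne (by norm_num)
  have hpoly := hasDerivAt_triangleSum (N := m + 1) (t := 0)
    (f := fun r s t => (1 + t) ^ (m - r - s) * f r s)
    (f' := fun r s _ => ((m - r - s : ℕ) : ℝ) * f r s)
    (fun r s => by simpa using (((hasDerivAt_id (0 : ℝ)).const_add 1).pow _).mul_const (f r s))
    y z
  exact (hasDerivAt_det_add_smul_one M).unique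
    (hpoly.congr_of_eventuallyEq (hnear.mono hscale))

namespace HasDetCoeffs

variable {N : ℕ} {B : Matrix ι ι ℝ} {Q : Matrix ι ι ℝ → ℕ → ℕ → ℝ}

theorem det_add_single_self_sub (hQ : HasDetCoeffs N B Q) (A : Matrix ι ι ℝ) (a : ι) (y z : ℝ) :
    triangleSum N y z (Q (A + single a a 1) - Q A)
      = y * (1 + y • A + z • B).adjugate a a := by
  have hM : 1 + y • (A + single a a 1) + z • B = (1 + y • A + z • B) + y • single a a 1 := by
    rw [smul_add]; abel
  rw [map_sub, ← hQ, ← hQ, hM, det_add_smul_single, add_sub_cancel_left]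

theorem add_smul_single_self (hQ : HasDetCoeffs N B Q) (A : Matrix ι ι ℝ) (a : ι) (t : ℝ)
    {r s : ℕ} (hrs : r + s < N) :
    Q (A + t • single a a 1) r s = Q A r s + t * (Q (A + single a a 1) r s - Q A r s) := by
  refine eq_of_forall_triangleSum_eq (g := Q A + t • (Q (A + single a a 1) - Q A))
    (fun y z => ?_) hrs
  have hM : 1 + y • (A + t • single a a 1) + z • B
      = (1 + y • A + z • B) + (t * y) • single a a 1 := by
    rw [smul_add, smul_smul, mul_comm]; abel
  rw [map_add, map_smul, det_add_single_self_sub hQ, ← hQ, ← hQ, hM, det_add_smul_single,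
    smul_eq_mul]
  ring

theorem sum_add_single_self_sub (hQ : HasDetCoeffs (Fintype.card ι + 1) B Q)
    (A : Matrix ι ι ℝ) {r s : ℕ} (hrs : r + 1 + s ≤ Fintype.card ι) :
    ∑ a, (Q (A + single a a 1) (r + 1) s - Q A (r + 1) s)
      = ((Fintype.card ι - r - s : ℕ) : ℝ) * Q A r s := by
  have hvanish : ∀ r s, r + s + 1 = Fintype.card ι + 1 →
      ((Fintype.card ι - r - s : ℕ) : ℝ) * Q A r s = 0 := by
    intro r s hrs
    simp [show Fintype.card ι - r - s = 0 by omega]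
  have hsum : ∀ y z, triangleSum (Fintype.card ι + 1) y z (∑ a, (Q (A + single a a 1) - Q A))
      = y * triangleSum (Fintype.card ι + 1) y z
        (fun r s => ((Fintype.card ι - r - s : ℕ) : ℝ) * Q A r s) := by
    intro y z
    simp only [map_sum, det_add_single_self_sub hQ, ← mul_sum]
    rw [← trace_adjugate_eq_triangleSum (hQ A)]
    rfl
  simpa using eq_of_forall_triangleSum_eq_mul_triangleSum hvanish hsum (by omega)

end HasDetCoeffs

end Matrix

theorem trace_newtonTensorA_eq_sum_sub {m N : ℕ}
    {P : Matrix (Fin m) (Fin m) ℝ → Matrix (Fin m) (Fin m) ℝ → ℕ → ℕ → ℝ}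
    {B : Matrix (Fin m) (Fin m) ℝ} {c : ℕ → ℕ → ℝ}
    (hQ : HasDetCoeffs N B fun A r s => c r s * P A B r s) (A : Matrix (Fin m) (Fin m) ℝ)
    {r s : ℕ} (hc : c r s ≠ 0) (hrs : r + s < N) :
    (newtonTensorA P A B r s).trace = ∑ a, (P (A + single a a 1) B r s - P A B r s) := by
  refine sum_congr rfl fun a _ => ?_
  have haff : ∀ t : ℝ, P (A + t • single a a 1) B r s
      = P A B r s + t * (P (A + single a a 1) B r s - P A B r s) := fun t =>
    mul_left_cancel₀ hc (by linear_combination hQ.add_smul_single_self A a t hrs)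
  simp only [newtonTensorA, diag_apply, of_apply, haff]
  simp

theorem newton_tensor_trace_A_general (n : ℕ)
    (P : Matrix (Fin (n - 1)) (Fin (n - 1)) ℝ → Matrix (Fin (n - 1)) (Fin (n - 1)) ℝ →
      ℕ → ℕ → ℝ)
    (hP : ∀ (A B : Matrix (Fin (n - 1)) (Fin (n - 1)) ℝ) (y z : ℝ),
      (1 + y • A + z • B).det =
        ∑ r ∈ Finset.range n, ∑ s ∈ Finset.range (n - r),
          (((r + s).factorial : ℝ) / ((r.factorial : ℝ) * (s.factorial : ℝ))) *
            y ^ r * z ^ s * P A B r s)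
    (A B : Matrix (Fin (n - 1)) (Fin (n - 1)) ℝ)
    (r s : ℕ) (hr : 1 ≤ r) (hrs : r + s ≤ n - 1) :
    (newtonTensorA P A B r s).trace =
      (r : ℝ) * ((n : ℝ) - ((r : ℝ) + (s : ℝ))) / ((r : ℝ) + (s : ℝ)) *
        P A B (r - 1) s := by
  obtain ⟨k, rfl⟩ : ∃ k, r = k + 1 := ⟨r - 1, by omega⟩
  set c : ℕ → ℕ → ℝ := fun r s => ((r + s).choose r : ℝ) with hc_def
  have hQ : HasDetCoeffs (Fintype.card (Fin (n - 1)) + 1) B fun A r s => c r s * P A B r s := by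
    intro A y z
    rw [Fintype.card_fin, Nat.sub_add_cancel (by omega), hP, triangleSum_apply]
    refine sum_congr rfl fun r _ => sum_congr rfl fun s _ => ?_
    rw [← Nat.cast_add_choose]
    ring
  have hc : c (k + 1) s ≠ 0 := Nat.cast_ne_zero.2 (Nat.choose_pos (by omega)).ne'
  have hsum := hQ.sum_add_single_self_sub A (r := k) (s := s) (by rw [Fintype.card_fin]; omega)
  have hchoose : c k s * (k + s + 1) = c (k + 1) s * (k + 1) := by
    simp only [hc_def, show k + 1 + s = k + s + 1 by omega]
    exact_mod_cast (mul_comm _ _).trans (Nat.add_one_mul_choose_eq (k + s) k)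
  rw [trace_newtonTensorA_eq_sum_sub hQ A hc (by rw [Fintype.card_fin]; omega)]
  simp only [← mul_sub, ← mul_sum, Fintype.card_fin] at hsum
  rw [Nat.cast_sub (by omega), Nat.cast_sub (by omega), Nat.cast_sub (by omega)] at hsum
  push_cast at hsum ⊢
  field_simp
  apply mul_left_cancel₀ hc
  linear_combination ((k : ℝ) + 1 + s) * hsum + ((n : ℝ) - 1 - k - s) * P A B k s * hchoose

/-- **Trace identity:** for `r ≥ 1`,
`tr(T_{r,s}(A,B)) = (r·(n-(r+s))/(r+s)) · P_{r-1,s}(A,B)`. -/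
theorem newton_tensor_trace_A (n : ℕ) (hn : 3 ≤ n)
    (P : Matrix (Fin (n - 1)) (Fin (n - 1)) ℝ → Matrix (Fin (n - 1)) (Fin (n - 1)) ℝ →
      ℕ → ℕ → ℝ)
    (hP : ∀ (A B : Matrix (Fin (n - 1)) (Fin (n - 1)) ℝ) (y z : ℝ),
      (1 + y • A + z • B).det =
        ∑ r ∈ Finset.range n, ∑ s ∈ Finset.range (n - r),
          (((r + s).factorial : ℝ) / ((r.factorial : ℝ) * (s.factorial : ℝ))) *
            y ^ r * z ^ s * P A B r s)
    (A B : Matrix (Fin (n - 1)) (Fin (n - 1)) ℝ)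
    (hA : A.IsHermitian) (hB : B.IsHermitian)
    (r s : ℕ) (hr : 1 ≤ r) (hrs : r + s ≤ n - 1) :
    (newtonTensorA P A B r s).trace =
      (r : ℝ) * ((n : ℝ) - ((r : ℝ) + (s : ℝ))) / ((r : ℝ) + (s : ℝ)) *
        P A B (r - 1) s :=
  newton_tensor_trace_A_general n P hP A B r s hr hrs
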